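/- arXiv:1710.01961 — 4 statements merged into one kernel-verified Lean document; each statement's English description precedes it below -/
import Mathlib

section
/- Localization Principle in the Extended Form I, necessity part: Suppose the set {(x,λ) ∈ Ω* × Λ : η(x,λ) = 0} is closed. If the separating function F is globally extendedly exact (with respect to η), then F is of penalty-type, F is non-degenerate, and F is locally extendedly exact at every globally optimal solution of (P). -/
open Filter Topology Set Bornology

section

variable {X Z : Type*} [NormedAddCommGroup X] [NormedSpace ℝ X] [FiniteDimensional ℝ X]
  [NormedAddCommGroup Z] [NormedSpace ℝ Z] [FiniteDimensional ℝ Z]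

/-- `(x, lam)` is a global minimizer of `F (·, ·, c)` over `A × Λ`. -/
def IsGlobMinOn (F : X → Z → ℝ → EReal) (A : Set X) (L : Set Z) (c : ℝ) (x : X) (lam : Z) :
    Prop :=
  x ∈ A ∧ lam ∈ L ∧ ∀ y ∈ A, ∀ mu ∈ L, F x lam c ≤ F y mu c

/-- `F` is globally extendedly exact with respect to `η`. -/
def GloballyExtendedlyExact (F : X → Z → ℝ → EReal) (η : X → Z → ℝ)
    (A : Set X) (L : Set Z) (OmegaStar : Set X) : Prop :=
  ∃ c₀ > (0 : ℝ), ∀ c ≥ c₀,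
    (∀ x lam, IsGlobMinOn F A L c x lam → η x lam = 0 ∧ x ∈ OmegaStar) ∧
    (∀ x ∈ OmegaStar, ∀ lam ∈ L, η x lam = 0 → IsGlobMinOn F A L c x lam)

/-- `F` is locally extendedly exact at `xs`. -/
def LocallyExtendedlyExactAt (F : X → Z → ℝ → EReal) (η : X → Z → ℝ)
    (A : Set X) (L : Set Z) (xs : X) : Prop :=
  ∀ lam ∈ L, η xs lam = 0 →
    ∃ c₀ > (0 : ℝ), ∃ U ∈ 𝓝 ((xs, lam) : X × Z), ∀ x lam', (x, lam') ∈ U → x ∈ A → lam' ∈ L →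
      ∀ c ≥ c₀, F xs lam c ≤ F x lam' c

/-- `F` is a penalty-type separating function. -/
def PenaltyType (F : X → Z → ℝ → EReal) (η : X → Z → ℝ)
    (A : Set X) (L : Set Z) (OmegaStar : Set X) : Prop :=
  ∃ c₀ > (0 : ℝ), ∀ cn : ℕ → ℝ, (∀ n, c₀ ≤ cn n) → StrictMono cn → ¬ BddAbove (Set.range cn) →
    ∀ (xn : ℕ → X) (ln : ℕ → Z), (∀ n, IsGlobMinOn F A L (cn n) (xn n) (ln n)) →
      ∀ (xs : X) (ls : Z), MapClusterPt ((xs, ls) : X × Z) atTop (fun n => (xn n, ln n)) →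
        xs ∈ OmegaStar ∧ η xs ls = 0

/-- `F` is non-degenerate. -/
def NonDegenerate (F : X → Z → ℝ → EReal) (A : Set X) (L : Set Z) : Prop :=
  ∃ c₀ > (0 : ℝ), ∃ R > (0 : ℝ), ∀ c ≥ c₀, ∃ x lam,
    IsGlobMinOn F A L c x lam ∧ ‖x‖ + ‖lam‖ ≤ R

/-- Localization Principle in the Extended Form I: necessity part. -/
theorem localization_principle_extended_I_necessity
    (M A : Set X) (hM : M.Nonempty) (hA : A.Nonempty)
    (f : X → EReal)
    (L : Set Z) (hLne : L.Nonempty) (hLcl : IsClosed L)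
    (F : X → Z → ℝ → EReal) (η : X → Z → ℝ)
    (OmegaStar : Set X)
    (hOS : OmegaStar = {x ∈ M ∩ A | ∀ y ∈ M ∩ A, f x ≤ f y})
    (hfeas : ∃ x ∈ M ∩ A, f x < ⊤)
    (hOSne : OmegaStar.Nonempty)
    (hη : ∀ x ∈ OmegaStar, ∃ lam ∈ L, η x lam = 0)
    (hclosed : IsClosed {p : X × Z | p.1 ∈ OmegaStar ∧ p.2 ∈ L ∧ η p.1 p.2 = 0})
    (hexact : GloballyExtendedlyExact F η A L OmegaStar) :
    PenaltyType F η A L OmegaStar ∧ NonDegenerate F A L ∧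
      ∀ xs ∈ OmegaStar, LocallyExtendedlyExactAt F η A L xs := by
  obtain ⟨c₀, hc₀, hc⟩ := hexact
  refine ⟨?_, ?_, ?_⟩
  · -- PenaltyType
    refine ⟨c₀, hc₀, fun cn hcn _ _ xn ln hmin xs ls hcl => ?_⟩
    set S := {p : X × Z | p.1 ∈ OmegaStar ∧ p.2 ∈ L ∧ η p.1 p.2 = 0} with hS
    have hmem : ∀ n, (xn n, ln n) ∈ S := by
      intro n
      obtain ⟨hη0, hx⟩ := (hc (cn n) (hcn n)).1 _ _ (hmin n)
      exact ⟨hx, (hmin n).2.1, hη0⟩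
    have hSin : S ∈ Filter.map (fun n => (xn n, ln n)) atTop := by
      exact Filter.mem_map.2 (Filter.Eventually.of_forall hmem)
    have : (xs, ls) ∈ closure S := by
      exact mem_closure_iff_clusterPt.2
        (hcl.clusterPt.mono (Filter.le_principal_iff.2 hSin))
    have hmemS : (xs, ls) ∈ S := hclosed.closure_subset this
    exact ⟨hmemS.1, hmemS.2.2⟩
  · -- NonDegenerate
    obtain ⟨xs, hxs⟩ := hOSne
    obtain ⟨ls, hls, hη0⟩ := hη xs hxs
    refine ⟨c₀, hc₀, ‖xs‖ + ‖ls‖ + 1, by positivity, fun c hcc => ?_⟩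
    exact ⟨xs, ls, (hc c hcc).2 xs hxs ls hls hη0, by linarith [norm_nonneg xs, norm_nonneg ls]⟩
  · -- locally exact
    intro xs hxs lam hlam hη0
    refine ⟨c₀, hc₀, Set.univ, Filter.univ_mem, fun x lam' _ hxA hlam' c hcc => ?_⟩
    exact ((hc c hcc).2 xs hxs lam hlam hη0).2.2 x hxA lam' hlam'

end
end

section
/- Localization Principle in the Extended Form I, sufficiency part: Suppose that the validity of the conditions η(x*,λ*) = 0 and (x*,λ*) ∈ argmin_{(x,λ) ∈ A×Λ} F(x,λ,c) for some x* ∈ Ω*, λ* ∈ Λ and c > 0 implies that F is globally extendedly exact. If (1) for every x* ∈ Ω* there exists λ* ∈ Λ with η(x*,λ*) = 0, (2) F is of penalty-type and non-degenerate, and (3) F is locally extendedly exact at every globally optimal solution of (P), then F is globally extendedly exact (with respect to η). -/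
open Filter Topology Set Bornology

section

variable {X Z : Type*} [NormedAddCommGroup X] [NormedSpace ℝ X] [FiniteDimensional ℝ X]
  [NormedAddCommGroup Z] [NormedSpace ℝ Z] [FiniteDimensional ℝ Z]

/-- Localization Principle in the Extended Form I: sufficiency part. -/
theorem localization_principle_extended_I_sufficiency
    (M A : Set X) (hM : M.Nonempty) (hA : A.Nonempty)
    (f : X → EReal)
    (L : Set Z) (hLne : L.Nonempty) (hLcl : IsClosed L)
    (F : X → Z → ℝ → EReal) (η : X → Z → ℝ)
    (OmegaStar : Set X)
    (hOS : OmegaStar = {x ∈ M ∩ A | ∀ y ∈ M ∩ A, f x ≤ f y})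
    (hfeas : ∃ x ∈ M ∩ A, f x < ⊤)
    (hOSne : OmegaStar.Nonempty)
    (himp : ∀ xs ∈ OmegaStar, ∀ lam ∈ L, ∀ c > (0 : ℝ),
      η xs lam = 0 → IsGlobMinOn F A L c xs lam →
        GloballyExtendedlyExact F η A L OmegaStar)
    (h1 : ∀ x ∈ OmegaStar, ∃ lam ∈ L, η x lam = 0)
    (h2 : PenaltyType F η A L OmegaStar ∧ NonDegenerate F A L)
    (h3 : ∀ xs ∈ OmegaStar, LocallyExtendedlyExactAt F η A L xs) :
    GloballyExtendedlyExact F η A L OmegaStar := by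
  obtain ⟨⟨c₁, hc₁, hpen⟩, ⟨c₂, hc₂, R, hR, hnd⟩⟩ := h2
  set c := max c₁ c₂ with hc
  -- the unbounded increasing sequence of penalty parameters
  set cn : ℕ → ℝ := fun n => c + n with hcn
  have hcge : ∀ n, c₁ ≤ cn n := fun n => by
    simp only [hcn]
    have : (0 : ℝ) ≤ n := Nat.cast_nonneg n
    have := le_max_left c₁ c₂
    linarith
  have hmono : StrictMono cn := by
    apply strictMono_nat_of_lt_succ
    intro n
    simp only [hcn, Nat.cast_succ]
    linarith
  have hunbdd : ¬ BddAbove (Set.range cn) := by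
    rintro ⟨b, hb⟩
    obtain ⟨n, hn⟩ := exists_nat_gt (b - c)
    have := hb (Set.mem_range_self (f := cn) n)
    simp only [hcn] at this
    linarith
  -- choose bounded minimizers
  choose xn ln hmin hbd using fun n => hnd (cn n) (by
    have : (0 : ℝ) ≤ n := Nat.cast_nonneg n
    have := le_max_right c₁ c₂
    simp only [hcn]; linarith)
  -- extract a convergent subsequence
  have hbdd : IsBounded (Metric.closedBall (0 : X × Z) R) := Metric.isBounded_closedBall
  have hmem : ∀ n, (xn n, ln n) ∈ Metric.closedBall (0 : X × Z) R := by
    intro n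
    simp only [Metric.mem_closedBall, dist_zero_right, Prod.norm_def]
    exact max_le (le_trans (le_add_of_nonneg_right (norm_nonneg _)) (hbd n))
      (le_trans (le_add_of_nonneg_left (norm_nonneg _)) (hbd n))
  obtain ⟨p, _, φ, hφ, htd⟩ := tendsto_subseq_of_bounded hbdd hmem
  obtain ⟨xs, ls⟩ := p
  -- cluster point
  have hclu : MapClusterPt ((xs, ls) : X × Z) atTop (fun n => (xn n, ln n)) :=
    MapClusterPt.of_comp hφ.tendsto_atTop htd.mapClusterPt
  obtain ⟨hxs, hη⟩ := hpen cn hcge hmono hunbdd xn ln hmin xs ls hclu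
  -- ls ∈ L
  have htd1 : Tendsto (fun n => ln (φ n)) atTop (𝓝 ls) :=
    (continuous_snd.tendsto _).comp htd
  have hls : ls ∈ L :=
    hLcl.mem_of_tendsto htd1 (Eventually.of_forall fun n => (hmin (φ n)).2.1)
  -- xs ∈ A
  have hxsA : xs ∈ A := by
    rw [hOS] at hxs
    exact hxs.1.2
  -- local exactness at xs
  obtain ⟨c₃, hc₃, U, hU, hloc⟩ := h3 xs hxs ls hls hη
  -- pick n large: (xn (φ n), ln (φ n)) ∈ U and cn (φ n) ≥ c₃
  have hev : ∀ᶠ n in atTop, (xn (φ n), ln (φ n)) ∈ U := htd.eventually_mem hU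
  obtain ⟨N, hN⟩ := hev.exists_forall_of_atTop
  obtain ⟨m, hm⟩ := exists_nat_ge c₃
  set n := max N m with hn
  have hU' : (xn (φ n), ln (φ n)) ∈ U := hN n (le_max_left _ _)
  have hcbig : c₃ ≤ cn (φ n) := by
    have h1 : (m : ℝ) ≤ (φ n : ℝ) := by
      exact_mod_cast le_trans (le_max_right N m) (hφ.le_apply)
    have h2 : (0 : ℝ) < c := lt_of_lt_of_le hc₂ (le_max_right c₁ c₂)
    simp only [hcn]
    linarith
  have hcpos : (0 : ℝ) < cn (φ n) := by
    have h2 : (0 : ℝ) < c := lt_of_lt_of_le hc₂ (le_max_right c₁ c₂)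
    have : (0 : ℝ) ≤ (φ n : ℝ) := Nat.cast_nonneg _
    simp only [hcn]; linarith
  -- (xs, ls) is a global minimizer of F(·,·,cn (φ n))
  obtain ⟨hxA', hlL', hglob⟩ := hmin (φ n)
  have hgm : IsGlobMinOn F A L (cn (φ n)) xs ls := by
    refine ⟨hxsA, hls, fun y hy mu hmu => ?_⟩
    exact le_trans (hloc (xn (φ n)) (ln (φ n)) hU' hxA' hlL' (cn (φ n)) hcbig)
      (hglob y hy mu hmu)
  exact himp xs hxs ls hls (cn (φ n)) hcpos hη hgm

end
end

section
/- If (x*,λ*,μ*) is a KKT point of the nonlinear semidefinite programming problem (P), then 𝓛(x*,λ*,μ*,c) = f(x*) for every c > 0. -/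
open Filter Topology Set Bornology Matrix

attribute [local instance] Matrix.frobeniusNormedAddCommGroup Matrix.frobeniusNormedSpace

noncomputable section

variable {d l s : ℕ}

/-- A square real matrix is negative semidefinite iff its negation is positive semidefinite. -/
def Matrix.NegSemidef (A : Matrix (Fin l) (Fin l) ℝ) : Prop := (-A).PosSemidef

/-- The metric projection (in the Frobenius norm) of a symmetric matrix onto the closed convex
cone of positive semidefinite matrices. -/
def psdProj (A : Matrix (Fin l) (Fin l) ℝ) : Matrix (Fin l) (Fin l) ℝ :=
  Classical.epsilon fun B : Matrix (Fin l) (Fin l) ℝ => B.PosSemidef ∧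
    ∀ C : Matrix (Fin l) (Fin l) ℝ, C.PosSemidef →
      ((A - B) * (A - B)ᵀ).trace ≤ ((A - C) * (A - C)ᵀ).trace

/-- The standard Lagrangian of the nonlinear semidefinite programming problem. -/
def sdpLagrangian (f : EuclideanSpace ℝ (Fin d) → ℝ)
    (G : EuclideanSpace ℝ (Fin d) → Matrix (Fin l) (Fin l) ℝ)
    (h : EuclideanSpace ℝ (Fin d) → EuclideanSpace ℝ (Fin s))
    (x : EuclideanSpace ℝ (Fin d)) (lam : Matrix (Fin l) (Fin l) ℝ)
    (mu : EuclideanSpace ℝ (Fin s)) : ℝ :=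
  f x + (lam * G x).trace + inner ℝ mu (h x)

/-- The function `η (x, λ, μ) = ‖∇ₓ L (x, λ, μ)‖² + tr (λ² G(x)²)`. -/
def sdpEta (f : EuclideanSpace ℝ (Fin d) → ℝ)
    (G : EuclideanSpace ℝ (Fin d) → Matrix (Fin l) (Fin l) ℝ)
    (h : EuclideanSpace ℝ (Fin d) → EuclideanSpace ℝ (Fin s))
    (x : EuclideanSpace ℝ (Fin d)) (lam : Matrix (Fin l) (Fin l) ℝ)
    (mu : EuclideanSpace ℝ (Fin s)) : ℝ :=
  ‖gradient (fun y => sdpLagrangian f G h y lam mu) x‖ ^ 2 + (lam ^ 2 * (G x) ^ 2).trace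

variable (f : EuclideanSpace ℝ (Fin d) → ℝ)
    (G : EuclideanSpace ℝ (Fin d) → Matrix (Fin l) (Fin l) ℝ)
    (h : EuclideanSpace ℝ (Fin d) → EuclideanSpace ℝ (Fin s)) (α κ : ℝ)

/-- `a (x) = α − tr([G(x)]₊²)^κ`. -/
def sdpA (x : EuclideanSpace ℝ (Fin d)) : ℝ := α - ((psdProj (G x) ^ 2).trace) ^ κ

/-- `b (x) = α − ‖h(x)‖²`. -/
def sdpB (x : EuclideanSpace ℝ (Fin d)) : ℝ := α - ‖h x‖ ^ 2

/-- `p (x, λ) = a(x) / (1 + tr(λ²))`. -/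
def sdpP (x : EuclideanSpace ℝ (Fin d)) (lam : Matrix (Fin l) (Fin l) ℝ) : ℝ :=
  sdpA G α κ x / (1 + (lam ^ 2).trace)

/-- `q (x, μ) = b(x) / (1 + ‖μ‖²)`. -/
def sdpQ (x : EuclideanSpace ℝ (Fin d)) (mu : EuclideanSpace ℝ (Fin s)) : ℝ :=
  sdpB h α x / (1 + ‖mu‖ ^ 2)

open Classical in
/-- The continuously differentiable augmented Lagrangian `𝓛 (x, λ, μ, c)` for the nonlinear
semidefinite programming problem. -/
def sdpAugLagrangian (x : EuclideanSpace ℝ (Fin d)) (lam : Matrix (Fin l) (Fin l) ℝ)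
    (mu : EuclideanSpace ℝ (Fin s)) (c : ℝ) : EReal :=
  if 0 < sdpA G α κ x ∧ 0 < sdpB h α x then
    ((f x
      + (1 / (2 * c * sdpP G α κ x lam)) *
        ((psdProj (c • G x + sdpP G α κ x lam • lam) ^ 2).trace
          - (sdpP G α κ x lam) ^ 2 * (lam ^ 2).trace)
      + inner ℝ mu (h x) + (c / (2 * sdpQ h α x mu)) * ‖h x‖ ^ 2
      + sdpEta f G h x lam mu : ℝ) : EReal)
  else ⊤

/-- The feasible set of the nonlinear semidefinite programming problem. -/
def sdpFeasible : Set (EuclideanSpace ℝ (Fin d)) := {x | (G x).NegSemidef ∧ h x = 0}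

/-- The set of globally optimal solutions of the nonlinear semidefinite programming problem. -/
def sdpOptimal : Set (EuclideanSpace ℝ (Fin d)) :=
  {x ∈ sdpFeasible G h | ∀ y ∈ sdpFeasible G h, f x ≤ f y}

/-- `(x, λ, μ)` is a global minimizer of `𝓛 (·, ·, ·, c)` over `ℝ^d × 𝕊^l × ℝ^s`. -/
def sdpGlobMin (c : ℝ) (x : EuclideanSpace ℝ (Fin d)) (lam : Matrix (Fin l) (Fin l) ℝ)
    (mu : EuclideanSpace ℝ (Fin s)) : Prop :=
  lam.IsSymm ∧ ∀ x' lam' mu', (lam' : Matrix (Fin l) (Fin l) ℝ).IsSymm →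
    sdpAugLagrangian f G h α κ x lam mu c ≤ sdpAugLagrangian f G h α κ x' lam' mu' c

/-- The augmented Lagrangian `𝓛` is globally extendedly exact (with respect to `η`). -/
def sdpGloballyExtendedlyExact : Prop :=
  ∃ c₀ > (0 : ℝ), ∀ c ≥ c₀,
    (∀ x lam mu, sdpGlobMin f G h α κ c x lam mu →
      sdpEta f G h x lam mu = 0 ∧ x ∈ sdpOptimal f G h) ∧
    (∀ x ∈ sdpOptimal f G h, ∀ (lam : Matrix (Fin l) (Fin l) ℝ) mu, lam.IsSymm →
      sdpEta f G h x lam mu = 0 → sdpGlobMin f G h α κ c x lam mu)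

/-- The augmented Lagrangian `𝓛` is locally extendedly exact at `xs`. -/
def sdpLocallyExtendedlyExactAt (xs : EuclideanSpace ℝ (Fin d)) : Prop :=
  ∀ (lam : Matrix (Fin l) (Fin l) ℝ) mu, lam.IsSymm → sdpEta f G h xs lam mu = 0 →
    ∃ c₀ > (0 : ℝ), ∃ U ∈ 𝓝 ((xs, lam, mu) :
        EuclideanSpace ℝ (Fin d) × Matrix (Fin l) (Fin l) ℝ × EuclideanSpace ℝ (Fin s)),
      ∀ x lam' mu', (x, lam', mu') ∈ U → (lam' : Matrix (Fin l) (Fin l) ℝ).IsSymm →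
        ∀ c ≥ c₀, sdpAugLagrangian f G h α κ xs lam mu c ≤ sdpAugLagrangian f G h α κ x lam' mu' c

/-- The augmented Lagrangian `𝓛` is non-degenerate. -/
def sdpNonDegenerate : Prop :=
  ∃ c₀ > (0 : ℝ), ∃ R > (0 : ℝ), ∀ c ≥ c₀, ∃ x lam mu,
    sdpGlobMin f G h α κ c x lam mu ∧ ‖x‖ + ‖lam‖ + ‖mu‖ ≤ R

/-- `(x, λ, μ)` is a KKT point of the nonlinear semidefinite programming problem. -/
def sdpKKT (x : EuclideanSpace ℝ (Fin d)) (lam : Matrix (Fin l) (Fin l) ℝ)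
    (mu : EuclideanSpace ℝ (Fin s)) : Prop :=
  lam.IsSymm ∧ (G x).NegSemidef ∧ h x = 0 ∧ lam.PosSemidef ∧ (lam * G x).trace = 0 ∧
    gradient (fun y => sdpLagrangian f G h y lam mu) x = 0

/-- A feasible point `x` is nondegenerate: for some basis `e₁, …, e_{l-r}` of the null space of
`G(x)` (where `r = rank G(x)`), the vectors `vᵢⱼ = (eᵢᵀ (∂G/∂x₁)(x) eⱼ, …, eᵢᵀ (∂G/∂x_d)(x) eⱼ)`,
`1 ≤ i ≤ j ≤ l - r`, together with the gradients `∇hₖ(x)`, `k = 1, …, s`, are linearly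
independent. -/
def sdpNondegeneratePoint (x : EuclideanSpace ℝ (Fin d)) : Prop :=
  ∃ e : Module.Basis (Fin (l - (G x).rank)) ℝ (LinearMap.ker (Matrix.mulVecLin (G x))),
    LinearIndependent ℝ
      (fun idx : {pr : Fin (l - (G x).rank) × Fin (l - (G x).rank) // pr.1 ≤ pr.2} ⊕ Fin s =>
        Sum.elim
          (fun pr : {pr : Fin (l - (G x).rank) × Fin (l - (G x).rank) // pr.1 ≤ pr.2} =>
            fun k : Fin d =>
              (e pr.1.1 : Fin l → ℝ) ⬝ᵥ
                (fderiv ℝ G x (EuclideanSpace.single k 1)) *ᵥ (e pr.1.2 : Fin l → ℝ))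
          (fun j : Fin s => fun k : Fin d =>
            fderiv ℝ (fun y => h y j) x (EuclideanSpace.single k 1))
          idx)

/-!
At a KKT point, `tr (λ G(x)) = 0` with `λ ⪰ 0 ⪰ G(x)` forces `λ G(x) = 0`. Hence
`c G(x) + p λ = p λ - c (-G(x))` is the Moreau decomposition of `c G(x) + p λ` along the
cone of positive semidefinite matrices and its polar, so `[c G(x) + p λ]₊ = p λ` and the penalty
term `tr ([c G(x) + p λ]₊²) - p² tr (λ²)` vanishes. Likewise `[G(x)]₊ = 0` and `h(x) = 0` give
`a(x) = b(x) = α > 0`, so `x ∈ Ω_α`, and `η` vanishes because `∇ₓL = 0` and `λ² G(x)² = 0`.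
-/

open scoped ComplexOrder

namespace Matrix

variable {m n 𝕜 : Type*} [Fintype m] [Fintype n] [RCLike 𝕜]

theorem trace_mul_transpose_self_nonneg (M : Matrix m n ℝ) : 0 ≤ (M * Mᵀ).trace :=
  (posSemidef_self_mul_conjTranspose M).trace_nonneg

theorem trace_mul_transpose_self_pos {M : Matrix m n ℝ} (hM : M ≠ 0) :
    0 < (M * Mᵀ).trace :=
  (trace_mul_transpose_self_nonneg M).lt_of_ne' (mt trace_mul_conjTranspose_self_eq_zero_iff.mp hM)

theorem trace_sub_mul_transpose_sub (X Y : Matrix m n ℝ) :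
    ((X - Y) * (X - Y)ᵀ).trace
      = (X * Xᵀ).trace - 2 * (X * Yᵀ).trace + (Y * Yᵀ).trace := by
  have hYX : (Y * Xᵀ).trace = (X * Yᵀ).trace := by
    rw [← trace_transpose, transpose_mul, transpose_transpose]
  simp only [transpose_sub, Matrix.sub_mul, Matrix.mul_sub, trace_sub, hYX]
  ring

theorem trace_conjTranspose_mul_self_mul_conjTranspose_mul_self (R S : Matrix n n 𝕜) :
    (Rᴴ * R * (Sᴴ * S)).trace = ((S * Rᴴ)ᴴ * (S * Rᴴ)).trace := by
  rw [conjTranspose_mul, conjTranspose_conjTranspose, Matrix.mul_assoc R, trace_mul_comm R,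
    trace_mul_comm (Rᴴ * R)]
  simp only [Matrix.mul_assoc]

variable [DecidableEq n]

open scoped MatrixOrder in
theorem PosSemidef.exists_eq_conjTranspose_mul_self {A : Matrix n n 𝕜}
    (hA : A.PosSemidef) : ∃ B : Matrix n n 𝕜, A = Bᴴ * B :=
  CStarAlgebra.nonneg_iff_eq_star_mul_self.mp hA.nonneg

theorem PosSemidef.trace_mul_nonneg {A B : Matrix n n 𝕜} (hA : A.PosSemidef)
    (hB : B.PosSemidef) : 0 ≤ (A * B).trace := by
  obtain ⟨R, rfl⟩ := hA.exists_eq_conjTranspose_mul_self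
  obtain ⟨S, rfl⟩ := hB.exists_eq_conjTranspose_mul_self
  rw [trace_conjTranspose_mul_self_mul_conjTranspose_mul_self]
  exact (posSemidef_conjTranspose_mul_self _).trace_nonneg

theorem PosSemidef.mul_eq_zero_of_trace_mul_eq_zero {A B : Matrix n n 𝕜} (hA : A.PosSemidef)
    (hB : B.PosSemidef) (hAB : (A * B).trace = 0) : A * B = 0 := by
  obtain ⟨R, rfl⟩ := hA.exists_eq_conjTranspose_mul_self
  obtain ⟨S, rfl⟩ := hB.exists_eq_conjTranspose_mul_self
  rw [trace_conjTranspose_mul_self_mul_conjTranspose_mul_self,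
    trace_conjTranspose_mul_self_eq_zero_iff] at hAB
  have hRS : R * Sᴴ = 0 := by simpa using congrArg (fun M => Mᴴ) hAB
  rw [Matrix.mul_assoc, ← Matrix.mul_assoc R, hRS, Matrix.zero_mul, Matrix.mul_zero]

end Matrix

theorem psdProj_eq_of_forall_lt {A P : Matrix (Fin l) (Fin l) ℝ} (hP : P.PosSemidef)
    (hlt : ∀ C : Matrix (Fin l) (Fin l) ℝ, C.PosSemidef → C ≠ P →
      ((A - P) * (A - P)ᵀ).trace < ((A - C) * (A - C)ᵀ).trace) :
    psdProj A = P := by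
  have hmin : ∀ C : Matrix (Fin l) (Fin l) ℝ, C.PosSemidef →
      ((A - P) * (A - P)ᵀ).trace ≤ ((A - C) * (A - C)ᵀ).trace := fun C hC => by
    rcases eq_or_ne C P with rfl | hCP
    exacts [le_rfl, (hlt C hC hCP).le]
  obtain ⟨hproj, hprojmin⟩ := Classical.epsilon_spec (p := fun B : Matrix (Fin l) (Fin l) ℝ =>
    B.PosSemidef ∧ ∀ C : Matrix (Fin l) (Fin l) ℝ, C.PosSemidef →
      ((A - B) * (A - B)ᵀ).trace ≤ ((A - C) * (A - C)ᵀ).trace) ⟨P, hP, hmin⟩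
  by_contra hne
  exact (hprojmin P hP).not_gt (hlt _ hproj hne)

/-- Moreau decomposition in the cone of positive semidefinite matrices. -/
theorem psdProj_sub_eq {P N : Matrix (Fin l) (Fin l) ℝ} (hP : P.PosSemidef) (hN : N.PosSemidef)
    (hPN : P * N = 0) : psdProj (P - N) = P := by
  refine psdProj_eq_of_forall_lt hP fun C hC hCP => ?_
  have hNt : Nᵀ = N := by simpa using hN.isHermitian.eq
  have hdist : ((P - N - C) * (P - N - C)ᵀ).trace
      = ((P - C) * (P - C)ᵀ).trace + 2 * (C * N).trace + (N * Nᵀ).trace := by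
    rw [sub_right_comm, trace_sub_mul_transpose_sub, hNt, Matrix.sub_mul P C N, trace_sub,
      hPN, trace_zero]
    ring
  have hPC : 0 < ((P - C) * (P - C)ᵀ).trace :=
    trace_mul_transpose_self_pos (sub_ne_zero.mpr hCP.symm)
  have hCN := hC.trace_mul_nonneg hN
  simp only [hdist, sub_sub_cancel_left, neg_mul, transpose_neg, mul_neg, neg_neg]
  linarith

theorem psdProj_eq_zero_of_negSemidef {A : Matrix (Fin l) (Fin l) ℝ} (hA : A.NegSemidef) :
    psdProj A = 0 := by
  simpa using psdProj_sub_eq PosSemidef.zero hA (Matrix.zero_mul _)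

section KKT

variable {f G h α κ} {x : EuclideanSpace ℝ (Fin d)} {lam : Matrix (Fin l) (Fin l) ℝ}
  {mu : EuclideanSpace ℝ (Fin s)}

theorem sdpA_eq_of_negSemidef (hκ : κ ≠ 0) (hG : (G x).NegSemidef) :
    sdpA G α κ x = α := by
  rw [sdpA, psdProj_eq_zero_of_negSemidef hG, zero_pow two_ne_zero, Matrix.trace_zero,
    Real.zero_rpow hκ, sub_zero]

theorem sdpB_eq_of_eq_zero (hh : h x = 0) : sdpB h α x = α := by
  simp [sdpB, hh]

namespace sdpKKT

theorem mul_eq_zero (hKKT : sdpKKT f G h x lam mu) : lam * G x = 0 := by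
  obtain ⟨-, hG, -, hlam, htr, -⟩ := hKKT
  simpa using hlam.mul_eq_zero_of_trace_mul_eq_zero hG (by simpa using htr)

theorem sdpEta_eq_zero (hKKT : sdpKKT f G h x lam mu) : sdpEta f G h x lam mu = 0 := by
  have hsq : lam ^ 2 * G x ^ 2 = 0 := by
    rw [sq, sq, Matrix.mul_assoc, ← Matrix.mul_assoc lam (G x), hKKT.mul_eq_zero, Matrix.zero_mul,
      Matrix.mul_zero]
  obtain ⟨-, -, -, -, -, hgrad⟩ := hKKT
  simp [sdpEta, hgrad, hsq]

theorem psdProj_smul_add_smul (hKKT : sdpKKT f G h x lam mu) {c p : ℝ} (hc : 0 ≤ c)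
    (hp : 0 ≤ p) : psdProj (c • G x + p • lam) = p • lam := by
  have hlamG := hKKT.mul_eq_zero
  obtain ⟨-, hG, -, hlam, -⟩ := hKKT
  have hcG : c • G x = -(c • -G x) := by rw [smul_neg, neg_neg]
  rw [hcG, neg_add_eq_sub]
  refine psdProj_sub_eq (hlam.smul hp) (hG.smul hc) ?_
  simp [hlamG]

end sdpKKT

end KKT

theorem sdp_augLagrangian_eq_at_KKT_points
    (hα : 0 < α) (hκ : 1 ≤ κ)
    (x : EuclideanSpace ℝ (Fin d)) (lam : Matrix (Fin l) (Fin l) ℝ)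
    (mu : EuclideanSpace ℝ (Fin s))
    (hKKT : sdpKKT f G h x lam mu) :
    ∀ c > (0 : ℝ), sdpAugLagrangian f G h α κ x lam mu c = ((f x : ℝ) : EReal) := by
  intro c hc
  have ⟨_, hG, hh, hlam, _⟩ := hKKT
  have hA : sdpA G α κ x = α := sdpA_eq_of_negSemidef (by linarith) hG
  have hp : 0 ≤ sdpP G α κ x lam := by
    rw [sdpP, hA]
    have hlam2 := (hlam.pow 2).trace_nonneg
    positivity
  rw [sdpAugLagrangian, if_pos ⟨hA.symm ▸ hα, (sdpB_eq_of_eq_zero hh).symm ▸ hα⟩,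
    hKKT.psdProj_smul_add_smul hc.le hp, hKKT.sdpEta_eq_zero, hh, smul_pow, Matrix.trace_smul]
  simp
end
end

section
/- Let f, G and h be continuously differentiable. Then for every fixed x ∈ Ω_α, λ ∈ 𝕊^l and μ ∈ ℝ^s, the function c ↦ 𝓛(x,λ,μ,c) is nondecreasing on (0,+∞). -/
open Filter Topology Set Bornology Matrix

attribute [local instance] Matrix.frobeniusNormedAddCommGroup Matrix.frobeniusNormedSpace

noncomputable section

variable {d l s : ℕ}

variable (f : EuclideanSpace ℝ (Fin d) → ℝ)
    (G : EuclideanSpace ℝ (Fin d) → Matrix (Fin l) (Fin l) ℝ)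
    (h : EuclideanSpace ℝ (Fin d) → EuclideanSpace ℝ (Fin s)) (α κ : ℝ)

/-!
If `P` is the point of a convex cone `K` nearest to `X`, then `⟪X - P, P⟫ = 0`, so
`‖P‖² = max_{C ∈ K} (2 ⟪X, C⟫ - ‖C‖²)`. Taking `X = c A + Λ` this reads
`(‖P‖² - ‖Λ‖²) / (2 c) = max_{C ∈ K} (⟪A, C⟫ - ‖C - Λ‖² / (2 c))`,
a maximum of functions that are nondecreasing in `c`. For the cone of positive semidefinite
matrices, `A = G(x)` and `Λ = p(x, λ) λ`, dividing this by `p(x, λ) > 0` gives the `c`-dependent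
semidefinite term of `𝓛`; the equality penalty `c ‖h(x)‖² / (2 q(x, μ))` is nondecreasing in `c`
as well, and the remaining terms do not depend on `c`. Matrices are treated through `vec`, which
carries the Frobenius inner product `tr (Aᵀ B)` to the Euclidean one.
-/

open scoped RealInnerProductSpace

section NearestPointOfCone

variable {F : Type*} [NormedAddCommGroup F] [InnerProductSpace ℝ F] {K : Set F}

theorem inner_sub_eq_zero_of_isMinOn_cone (hK : Convex ℝ K)
    (hcone : ∀ C ∈ K, ∀ t : ℝ, 0 ≤ t → t • C ∈ K) {X P : F} (hP : P ∈ K)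
    (hmin : IsMinOn (fun C => ‖X - C‖) K P) : ⟪X - P, P⟫ = 0 := by
  have : Nonempty K := ⟨⟨P, hP⟩⟩
  have hbdd : BddBelow (Set.range fun C : K => ‖X - C‖) :=
    ⟨0, Set.forall_mem_range.2 fun _ => norm_nonneg _⟩
  have hinf : ‖X - P‖ = ⨅ C : K, ‖X - C‖ :=
    le_antisymm (le_ciInf fun C => hmin C.2) (ciInf_le hbdd ⟨P, hP⟩)
  have hvar := (norm_eq_iInf_iff_real_inner_le_zero hK hP).1 hinf
  have h0 := hvar 0 (by simpa using hcone P hP 0 le_rfl)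
  have h2 := hvar ((2 : ℝ) • P) (hcone P hP 2 zero_le_two)
  rw [two_smul, add_sub_cancel_right] at h2
  rw [zero_sub, inner_neg_right] at h0
  linarith

theorem two_inner_sub_norm_sq_le_of_isMinOn_cone (hK : Convex ℝ K)
    (hcone : ∀ C ∈ K, ∀ t : ℝ, 0 ≤ t → t • C ∈ K) {X P : F} (hP : P ∈ K)
    (hmin : IsMinOn (fun C => ‖X - C‖) K P) :
    2 * ⟪X, P⟫ - ‖P‖ ^ 2 = ‖P‖ ^ 2 ∧ ∀ C ∈ K, 2 * ⟪X, C⟫ - ‖C‖ ^ 2 ≤ ‖P‖ ^ 2 := by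
  have horth := inner_sub_eq_zero_of_isMinOn_cone hK hcone hP hmin
  rw [inner_sub_left, real_inner_self_eq_norm_sq, sub_eq_zero] at horth
  refine ⟨by rw [horth]; ring, fun C hC => ?_⟩
  have hle : ‖X - P‖ ^ 2 ≤ ‖X - C‖ ^ 2 := pow_le_pow_left₀ (norm_nonneg _) (hmin hC) 2
  rw [norm_sub_sq_real, norm_sub_sq_real, horth] at hle
  linarith

theorem norm_sq_sub_norm_sq_div_le_of_isMinOn_cone (hK : Convex ℝ K)
    (hcone : ∀ C ∈ K, ∀ t : ℝ, 0 ≤ t → t • C ∈ K) {A Λ P₁ P₂ : F} {c₁ c₂ : ℝ}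
    (hc₁ : 0 < c₁) (hc : c₁ ≤ c₂)
    (hP₁ : P₁ ∈ K) (hmin₁ : IsMinOn (fun C => ‖c₁ • A + Λ - C‖) K P₁)
    (hP₂ : P₂ ∈ K) (hmin₂ : IsMinOn (fun C => ‖c₂ • A + Λ - C‖) K P₂) :
    (‖P₁‖ ^ 2 - ‖Λ‖ ^ 2) / (2 * c₁) ≤ (‖P₂‖ ^ 2 - ‖Λ‖ ^ 2) / (2 * c₂) := by
  have hc₂ : 0 < c₂ := hc₁.trans_le hc
  have expand : ∀ c : ℝ, ∀ C : F,
      2 * ⟪c • A + Λ, C⟫ - ‖C‖ ^ 2 - ‖Λ‖ ^ 2 = 2 * c * ⟪A, C⟫ - ‖C - Λ‖ ^ 2 := fun c C => by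
    rw [inner_add_left, real_inner_smul_left, norm_sub_sq_real, real_inner_comm Λ C]
    ring
  have h₁ : ‖P₁‖ ^ 2 - ‖Λ‖ ^ 2 = 2 * c₁ * ⟪A, P₁⟫ - ‖P₁ - Λ‖ ^ 2 := by
    rw [← expand, (two_inner_sub_norm_sq_le_of_isMinOn_cone hK hcone hP₁ hmin₁).1]
  have h₂ : 2 * c₂ * ⟪A, P₁⟫ - ‖P₁ - Λ‖ ^ 2 ≤ ‖P₂‖ ^ 2 - ‖Λ‖ ^ 2 := by
    rw [← expand]
    linarith [(two_inner_sub_norm_sq_le_of_isMinOn_cone hK hcone hP₂ hmin₂).2 P₁ hP₁]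
  calc (‖P₁‖ ^ 2 - ‖Λ‖ ^ 2) / (2 * c₁) = ⟪A, P₁⟫ - ‖P₁ - Λ‖ ^ 2 / (2 * c₁) := by
        rw [h₁]; field_simp
    _ ≤ ⟪A, P₁⟫ - ‖P₁ - Λ‖ ^ 2 / (2 * c₂) := by gcongr
    _ = (2 * c₂ * ⟪A, P₁⟫ - ‖P₁ - Λ‖ ^ 2) / (2 * c₂) := by field_simp
    _ ≤ (‖P₂‖ ^ 2 - ‖Λ‖ ^ 2) / (2 * c₂) := by gcongr

end NearestPointOfCone

namespace Matrix

variable {m n : Type*}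

open scoped ComplexOrder in
theorem isClosed_setOf_posSemidef [Fintype n] {𝕜 : Type*} [RCLike 𝕜] :
    IsClosed {A : Matrix n n 𝕜 | A.PosSemidef} := by
  simp_rw [posSemidef_iff_dotProduct_mulVec, Set.ofPred_and, Set.ofPred_forall]
  exact (isClosed_eq continuous_id.matrix_conjTranspose continuous_id).inter <|
    isClosed_iInter fun x => isClosed_le continuous_const <|
      continuous_const.dotProduct (continuous_id.matrix_mulVec continuous_const)

abbrev vecL2 (A : Matrix m n ℝ) : EuclideanSpace ℝ (n × m) := WithLp.toLp 2 A.vec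

theorem vecL2_smul_add (c : ℝ) (A B : Matrix m n ℝ) :
    (c • A + B).vecL2 = c • A.vecL2 + B.vecL2 :=
  rfl

theorem inner_vecL2 [Fintype m] [Fintype n] (A B : Matrix m n ℝ) :
    ⟪A.vecL2, B.vecL2⟫ = (Aᵀ * B).trace := by
  rw [EuclideanSpace.inner_eq_star_dotProduct, star_trivial, dotProduct_comm]
  exact vec_dotProduct_vec A B

theorem trace_mul_transpose_self_eq_norm_sq [Fintype m] [Fintype n] (A : Matrix m n ℝ) :
    (A * Aᵀ).trace = ‖A.vecL2‖ ^ 2 := by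
  rw [← real_inner_self_eq_norm_sq, inner_vecL2, trace_mul_comm]

theorem IsSymm.trace_sq_eq_norm_sq [Fintype n] [DecidableEq n] {A : Matrix n n ℝ}
    (hA : A.IsSymm) :
    (A ^ 2).trace = ‖A.vecL2‖ ^ 2 := by
  rw [← trace_mul_transpose_self_eq_norm_sq, hA.eq, sq]

variable (n) in
def posSemidefVecs : Set (EuclideanSpace ℝ (n × n)) :=
  {v | (of fun i j => v (j, i)).PosSemidef}

theorem vecL2_mem_posSemidefVecs {A : Matrix n n ℝ} :
    A.vecL2 ∈ posSemidefVecs n ↔ A.PosSemidef :=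
  Iff.rfl

theorem convex_posSemidefVecs : Convex ℝ (posSemidefVecs n) :=
  fun _ hv _ hw _ _ ha hb _ => (hv.smul ha).add (hw.smul hb)

theorem smul_mem_posSemidefVecs {v : EuclideanSpace ℝ (n × n)} (hv : v ∈ posSemidefVecs n) {t : ℝ}
    (ht : 0 ≤ t) : t • v ∈ posSemidefVecs n :=
  hv.smul ht

theorem isClosed_posSemidefVecs [Fintype n] : IsClosed (posSemidefVecs n) :=
  isClosed_setOf_posSemidef.preimage <|
    continuous_matrix fun i j => PiLp.continuous_apply 2 _ (j, i)

theorem trace_sub_mul_transpose_le_iff [Fintype n] (A B C : Matrix n n ℝ) :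
    ((A - B) * (A - B)ᵀ).trace ≤ ((A - C) * (A - C)ᵀ).trace ↔
      ‖A.vecL2 - B.vecL2‖ ≤ ‖A.vecL2 - C.vecL2‖ := by
  rw [trace_mul_transpose_self_eq_norm_sq, trace_mul_transpose_self_eq_norm_sq,
    pow_le_pow_iff_left₀ (norm_nonneg _) (norm_nonneg _) two_ne_zero]
  rfl

theorem exists_posSemidef_forall_trace_le [Fintype n] (A : Matrix n n ℝ) :
    ∃ B : Matrix n n ℝ, B.PosSemidef ∧ ∀ C : Matrix n n ℝ, C.PosSemidef →
      ((A - B) * (A - B)ᵀ).trace ≤ ((A - C) * (A - C)ᵀ).trace := by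
  obtain ⟨v, hv, hdist⟩ :=
    isClosed_posSemidefVecs.exists_infDist_eq_dist ⟨0, PosSemidef.zero⟩ A.vecL2
  refine ⟨of fun i j => v (j, i), hv, fun C hC => ?_⟩
  rw [trace_sub_mul_transpose_le_iff, ← dist_eq_norm, ← dist_eq_norm]
  exact hdist ▸ Metric.infDist_le_dist_of_mem hC

end Matrix

theorem psdProj_mem_isMinOn (A : Matrix (Fin l) (Fin l) ℝ) :
    (psdProj A).vecL2 ∈ posSemidefVecs (Fin l) ∧
      IsMinOn (fun C => ‖A.vecL2 - C‖) (posSemidefVecs (Fin l)) (psdProj A).vecL2 := by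
  have hspec : (psdProj A).PosSemidef ∧ ∀ C : Matrix (Fin l) (Fin l) ℝ, C.PosSemidef →
      ((A - psdProj A) * (A - psdProj A)ᵀ).trace ≤ ((A - C) * (A - C)ᵀ).trace :=
    Classical.epsilon_spec (exists_posSemidef_forall_trace_le A)
  refine ⟨vecL2_mem_posSemidefVecs.2 hspec.1, isMinOn_iff.2 fun C hC => ?_⟩
  exact (trace_sub_mul_transpose_le_iff A (psdProj A) (of fun i j => C (j, i))).1 (hspec.2 _ hC)

theorem isSymm_psdProj (A : Matrix (Fin l) (Fin l) ℝ) : (psdProj A).IsSymm := by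
  have hP : (psdProj A)ᴴ = psdProj A := (psdProj_mem_isMinOn A).1.1
  rwa [conjTranspose_eq_transpose_of_trivial] at hP

theorem psdProj_trace_sq_sub_div_le {A Λ : Matrix (Fin l) (Fin l) ℝ} (hΛ : Λ.IsSymm) {c₁ c₂ : ℝ}
    (hc₁ : 0 < c₁) (hc : c₁ ≤ c₂) :
    ((psdProj (c₁ • A + Λ) ^ 2).trace - (Λ ^ 2).trace) / (2 * c₁) ≤
      ((psdProj (c₂ • A + Λ) ^ 2).trace - (Λ ^ 2).trace) / (2 * c₂) := by
  rw [hΛ.trace_sq_eq_norm_sq, (isSymm_psdProj _).trace_sq_eq_norm_sq,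
    (isSymm_psdProj _).trace_sq_eq_norm_sq]
  obtain ⟨h₁, hmin₁⟩ := psdProj_mem_isMinOn (c₁ • A + Λ)
  obtain ⟨h₂, hmin₂⟩ := psdProj_mem_isMinOn (c₂ • A + Λ)
  rw [vecL2_smul_add] at hmin₁ hmin₂
  exact norm_sq_sub_norm_sq_div_le_of_isMinOn_cone (F := EuclideanSpace ℝ (Fin l × Fin l))
    convex_posSemidefVecs (fun _ hv _ ht => smul_mem_posSemidefVecs hv ht) hc₁ hc
    h₁ hmin₁ h₂ hmin₂

theorem sdp_augLagrangian_monotone_in_c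
    (x : EuclideanSpace ℝ (Fin d)) (lam : Matrix (Fin l) (Fin l) ℝ)
    (mu : EuclideanSpace ℝ (Fin s))
    (hsym : lam.IsSymm) (ha : 0 < sdpA G α κ x) (hb : 0 < sdpB h α x) :
    ∀ c₁ c₂ : ℝ, 0 < c₁ → c₁ ≤ c₂ →
      sdpAugLagrangian f G h α κ x lam mu c₁ ≤ sdpAugLagrangian f G h α κ x lam mu c₂ := by
  intro c₁ c₂ hc₁ hc
  simp only [sdpAugLagrangian, if_pos (And.intro ha hb), EReal.coe_le_coe_iff]
  set p := sdpP G α κ x lam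
  have hp : 0 < p := div_pos ha (by rw [hsym.trace_sq_eq_norm_sq]; positivity)
  have hq : 0 < sdpQ h α x mu := div_pos hb (by positivity)
  have hmult : ∀ c Z : ℝ, 1 / (2 * c * p) * Z = Z / (2 * c) / p := fun c Z => by ring
  have hpΛ : ((p • lam) ^ 2).trace = p ^ 2 * (lam ^ 2).trace := by
    rw [smul_pow, trace_smul, smul_eq_mul]
  have hsdp := psdProj_trace_sq_sub_div_le (A := G x) (hsym.smul p) hc₁ hc
  rw [hpΛ] at hsdp
  have hpen : c₁ / (2 * sdpQ h α x mu) * ‖h x‖ ^ 2 ≤ c₂ / (2 * sdpQ h α x mu) * ‖h x‖ ^ 2 := by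
    gcongr
  rw [hmult c₁, hmult c₂]
  linarith [div_le_div_of_nonneg_right hsdp hp.le]

end
end
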